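/- For a regular point x of a differentiable orientation-preserving homeomorphism f with positive Jacobian, the following chain of inequalities holds: 1/K_f(x) ≤ 1/L_f(x)^{1/(n-1)} ≤ 1/D_f(x,x_0)^{1/(n-1)} ≤ Q_f(x,x_0) ≤ K_f(x)^{1/(n-1)} ≤ L_f(x). -/

import Mathlib

open Set MeasureTheory Metric ENNReal

noncomputable def maxStretch {n : ℕ} (A : EuclideanSpace ℝ (Fin n) →L[ℝ] EuclideanSpace ℝ (Fin n)) : ℝ :=
  sSup {r : ℝ | ∃ h : EuclideanSpace ℝ (Fin n), ‖h‖ = 1 ∧ r = ‖A h‖}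

noncomputable def minStretch {n : ℕ} (A : EuclideanSpace ℝ (Fin n) →L[ℝ] EuclideanSpace ℝ (Fin n)) : ℝ :=
  sInf {r : ℝ | ∃ h : EuclideanSpace ℝ (Fin n), ‖h‖ = 1 ∧ r = ‖A h‖}

/-- The Jacobian determinant of a linear map. -/
noncomputable def jac {n : ℕ} (A : EuclideanSpace ℝ (Fin n) →L[ℝ] EuclideanSpace ℝ (Fin n)) : ℝ :=
  LinearMap.det (A : EuclideanSpace ℝ (Fin n) →ₗ[ℝ] EuclideanSpace ℝ (Fin n))

/-- The outer dilatation K_f(x) = ‖f'(x)‖ⁿ/J_f(x). -/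
noncomputable def Kdil {n : ℕ} (A : EuclideanSpace ℝ (Fin n) →L[ℝ] EuclideanSpace ℝ (Fin n)) : ℝ :=
  maxStretch A ^ n / jac A

/-- The inner dilatation L_f(x) = J_f(x)/l_f(x)ⁿ. -/
noncomputable def Ldil {n : ℕ} (A : EuclideanSpace ℝ (Fin n) →L[ℝ] EuclideanSpace ℝ (Fin n)) : ℝ :=
  jac A / minStretch A ^ n

/-- ℓ_f(x,x₀) = min over unit h with h·u ≠ 0 of |f'(x)h|/|h·u|. -/
noncomputable def ellAng {n : ℕ} (A : EuclideanSpace ℝ (Fin n) →L[ℝ] EuclideanSpace ℝ (Fin n))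
    (u : EuclideanSpace ℝ (Fin n)) : ℝ :=
  sInf {r : ℝ | ∃ h : EuclideanSpace ℝ (Fin n),
    ‖h‖ = 1 ∧ (inner ℝ h u : ℝ) ≠ 0 ∧ r = ‖A h‖ / |(inner ℝ h u : ℝ)|}

/-- The angular dilatation D_f(x,x₀) = J_f(x)/ℓ_f(x,x₀)ⁿ. -/
noncomputable def Ddil {n : ℕ} (A : EuclideanSpace ℝ (Fin n) →L[ℝ] EuclideanSpace ℝ (Fin n))
    (u : EuclideanSpace ℝ (Fin n)) : ℝ :=
  jac A / ellAng A u ^ n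

/-- The normal dilatation Q_f(x,x₀) = (|∂_u f(x)|ⁿ/J_f(x))^{1/(n-1)}. -/
noncomputable def Qdil {n : ℕ} (A : EuclideanSpace ℝ (Fin n) →L[ℝ] EuclideanSpace ℝ (Fin n))
    (u : EuclideanSpace ℝ (Fin n)) : ℝ :=
  (‖A u‖ ^ n / jac A) ^ ((1:ℝ) / ((n : ℝ) - 1))

/-- The spherical annulus A(a,b) = {a < |x| < b}. -/
noncomputable def ann (n : ℕ) (a b : ℝ) : Set (EuclideanSpace ℝ (Fin n)) :=
  {x | a < ‖x‖ ∧ ‖x‖ < b}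

/-- The area ω_{n-1} of the unit sphere S^{n-1} in ℝⁿ. -/
noncomputable def sphereArea (n : ℕ) : ℝ :=
  n * (volume (Metric.ball (0 : EuclideanSpace ℝ (Fin n)) 1)).toReal

/-!
Write `σ₀ ≥ σ₁ ≥ ⋯ ≥ σₙ₋₁ ≥ 0` for the singular values of `A = f'(x)`. Expanding `|Ah|²` in an
orthonormal eigenbasis of `A*A` shows `‖A‖ = σ₀` and `l_f(x) = σₙ₋₁`, while `|J_f(x)| = σ₀ ⋯ σₙ₋₁`.
Hence `‖A‖ l^{n-1} ≤ J ≤ ‖A‖^{n-1} l`, which is exactly `K ≤ L^{n-1}` and `L ≤ K^{n-1}`, the outer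
links of the chain. The inner links follow from `l ≤ ℓ_f(x,x₀) ≤ |Au| ≤ ‖A‖`, where the middle
inequality is the choice `h = u` in the definition of `ℓ_f`.
-/

open Module Finset
open scoped InnerProductSpace

theorem Real.rpow_one_div_sub_one_le_iff {n : ℕ} (hn : 1 < n) {a b : ℝ} (ha : 0 ≤ a)
    (hb : 0 ≤ b) : a ^ (1 / ((n : ℝ) - 1)) ≤ b ↔ a ≤ b ^ (n - 1) := by
  have hn1 : (0 : ℝ) < (n : ℝ) - 1 := by
    have : (1 : ℝ) < n := by exact_mod_cast hn
    linarith
  rw [one_div, Real.rpow_inv_le_iff_of_pos ha hb hn1, ← Nat.cast_one, ← Nat.cast_sub hn.le,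
    Real.rpow_natCast]

theorem one_div_natCast_sub_one_nonneg {n : ℕ} (hn : 1 ≤ n) : (0 : ℝ) ≤ 1 / ((n : ℝ) - 1) :=
  one_div_nonneg.mpr (by simpa using hn)

section AntitoneProd

variable {R : Type*} [CommSemiring R] [PartialOrder R] [IsOrderedRing R] {f : ℕ → R}

theorem prod_range_succ_le_pow_mul_of_antitone (hf : Antitone f) (h0 : ∀ i, 0 ≤ f i) (k : ℕ) :
    ∏ i ∈ range (k + 1), f i ≤ f 0 ^ k * f k := by
  rw [prod_range_succ]
  refine mul_le_mul_of_nonneg_right ?_ (h0 k)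
  calc ∏ i ∈ range k, f i ≤ ∏ _i ∈ range k, f 0 :=
        prod_le_prod (fun i _ => h0 i) fun i _ => hf (Nat.zero_le i)
    _ = f 0 ^ k := by rw [prod_const, card_range]

theorem mul_pow_le_prod_range_succ_of_antitone (hf : Antitone f) (h0 : ∀ i, 0 ≤ f i) (k : ℕ) :
    f 0 * f k ^ k ≤ ∏ i ∈ range (k + 1), f i := by
  rw [prod_range_succ', mul_comm]
  refine mul_le_mul_of_nonneg_right ?_ (h0 0)
  calc f k ^ k = ∏ _i ∈ range k, f k := by rw [prod_const, card_range]
    _ ≤ ∏ i ∈ range k, f (i + 1) :=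
        prod_le_prod (fun i _ => h0 k) fun i hi => hf (by simpa using hi)

end AntitoneProd

namespace LinearMap

variable {𝕜 : Type*} [RCLike 𝕜]
  {E : Type*} [NormedAddCommGroup E] [InnerProductSpace 𝕜 E] [FiniteDimensional 𝕜 E]
  {F : Type*} [NormedAddCommGroup F] [InnerProductSpace 𝕜 F] [FiniteDimensional 𝕜 F]
  (T : E →ₗ[𝕜] F)

theorem norm_apply_sq_eq_sum_singularValues {n : ℕ} (hn : finrank 𝕜 E = n) (v : E) :
    ‖T v‖ ^ 2 = ∑ i : Fin n, T.singularValues i ^ 2 *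
      ‖(T.isSymmetric_adjoint_comp_self.eigenvectorBasis hn).repr v i‖ ^ 2 := by
  set b := T.isSymmetric_adjoint_comp_self.eigenvectorBasis hn
  have h : ⟪v, adjoint T (T v)⟫_𝕜 = ⟪T v, T v⟫_𝕜 := adjoint_inner_right T v (T v)
  rw [← b.repr.inner_map_map, PiLp.inner_apply] at h
  rw [← RCLike.ofReal_inj (K := 𝕜), RCLike.ofReal_pow, ← inner_self_eq_norm_sq_to_K, ← h]
  push_cast
  refine sum_congr rfl fun i _ => ?_
  rw [← comp_apply, T.isSymmetric_adjoint_comp_self.eigenvectorBasis_apply_self_apply,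
    ← sq_singularValues_fin, RCLike.inner_apply, mul_assoc, RCLike.mul_conj]
  push_cast
  rfl

theorem exists_norm_eq_one_norm_apply_eq_singularValues {i : ℕ} (hi : i < finrank 𝕜 E) :
    ∃ v : E, ‖v‖ = 1 ∧ ‖T v‖ = T.singularValues i := by
  set b := T.isSymmetric_adjoint_comp_self.eigenvectorBasis rfl
  refine ⟨b ⟨i, hi⟩, b.orthonormal.1 _, ?_⟩
  rw [← sq_eq_sq₀ (norm_nonneg _) (T.singularValues_nonneg i),
    T.norm_apply_sq_eq_sum_singularValues rfl, sum_eq_single ⟨i, hi⟩]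
  · simp [b]
  · intro j _ hj
    simp [b, OrthonormalBasis.repr_self, hj]
  · simp

theorem norm_apply_le_singularValues_zero_mul (v : E) :
    ‖T v‖ ≤ T.singularValues 0 * ‖v‖ := by
  set b := T.isSymmetric_adjoint_comp_self.eigenvectorBasis rfl
  have hσ := T.singularValues_nonneg 0
  rw [← pow_le_pow_iff_left₀ (norm_nonneg _) (by positivity) two_ne_zero, mul_pow,
    ← b.repr.norm_map, EuclideanSpace.norm_sq_eq, mul_sum,
    T.norm_apply_sq_eq_sum_singularValues rfl]
  refine sum_le_sum fun i _ => mul_le_mul_of_nonneg_right ?_ (sq_nonneg _)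
  exact pow_le_pow_left₀ (T.singularValues_nonneg _) (T.singularValues_antitone (Nat.zero_le _)) 2

theorem singularValues_finrank_sub_one_mul_le_norm_apply (v : E) :
    T.singularValues (finrank 𝕜 E - 1) * ‖v‖ ≤ ‖T v‖ := by
  set b := T.isSymmetric_adjoint_comp_self.eigenvectorBasis rfl
  have hσ := T.singularValues_nonneg (finrank 𝕜 E - 1)
  rw [← pow_le_pow_iff_left₀ (by positivity) (norm_nonneg _) two_ne_zero, mul_pow,
    ← b.repr.norm_map, EuclideanSpace.norm_sq_eq, mul_sum,
    T.norm_apply_sq_eq_sum_singularValues rfl]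
  refine sum_le_sum fun i _ => mul_le_mul_of_nonneg_right ?_ (sq_nonneg _)
  exact pow_le_pow_left₀ (T.singularValues_nonneg _) (T.singularValues_antitone (by omega)) 2

end LinearMap

section Dilatation

variable {n : ℕ} (A : EuclideanSpace ℝ (Fin n) →L[ℝ] EuclideanSpace ℝ (Fin n))

theorem maxStretch_eq_singularValues_zero (hn : 0 < n) :
    maxStretch A = A.toLinearMap.singularValues 0 := by
  refine IsGreatest.csSup_eq ⟨?_, ?_⟩
  · obtain ⟨v, hv, hAv⟩ := A.toLinearMap.exists_norm_eq_one_norm_apply_eq_singularValues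
      (i := 0) (by rwa [finrank_euclideanSpace_fin])
    exact ⟨v, hv, hAv.symm⟩
  · rintro r ⟨h, hh, rfl⟩
    simpa [hh] using A.toLinearMap.norm_apply_le_singularValues_zero_mul h

theorem minStretch_eq_singularValues_sub_one (hn : 0 < n) :
    minStretch A = A.toLinearMap.singularValues (n - 1) := by
  refine IsLeast.csInf_eq ⟨?_, ?_⟩
  · obtain ⟨v, hv, hAv⟩ := A.toLinearMap.exists_norm_eq_one_norm_apply_eq_singularValues
      (i := n - 1) (by rw [finrank_euclideanSpace_fin]; omega)
    exact ⟨v, hv, hAv.symm⟩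
  · rintro r ⟨h, hh, rfl⟩
    simpa [hh] using A.toLinearMap.singularValues_finrank_sub_one_mul_le_norm_apply h

theorem abs_jac_eq_prod_singularValues :
    |jac A| = ∏ i ∈ range n, A.toLinearMap.singularValues i := by
  rw [jac, ← LinearMap.normDet_eq_abs_det, LinearMap.normDet_eq_prod_singularValues,
    finrank_euclideanSpace_fin]

theorem jac_le_maxStretch_pow_mul_minStretch (hn : 0 < n) :
    jac A ≤ maxStretch A ^ (n - 1) * minStretch A := by
  obtain ⟨k, rfl⟩ : ∃ k, n = k + 1 := ⟨n - 1, by omega⟩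
  rw [maxStretch_eq_singularValues_zero A hn, minStretch_eq_singularValues_sub_one A hn]
  calc jac A ≤ |jac A| := le_abs_self _
    _ = ∏ i ∈ range (k + 1), A.toLinearMap.singularValues i := abs_jac_eq_prod_singularValues A
    _ ≤ A.toLinearMap.singularValues 0 ^ k * A.toLinearMap.singularValues k :=
        prod_range_succ_le_pow_mul_of_antitone A.toLinearMap.singularValues_antitone
          A.toLinearMap.singularValues_nonneg k

theorem maxStretch_mul_minStretch_pow_le_jac (hn : 0 < n) (hJ : 0 ≤ jac A) :
    maxStretch A * minStretch A ^ (n - 1) ≤ jac A := by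
  obtain ⟨k, rfl⟩ : ∃ k, n = k + 1 := ⟨n - 1, by omega⟩
  rw [maxStretch_eq_singularValues_zero A hn, minStretch_eq_singularValues_sub_one A hn]
  calc A.toLinearMap.singularValues 0 * A.toLinearMap.singularValues k ^ k
        ≤ ∏ i ∈ range (k + 1), A.toLinearMap.singularValues i :=
          mul_pow_le_prod_range_succ_of_antitone A.toLinearMap.singularValues_antitone
            A.toLinearMap.singularValues_nonneg k
    _ = |jac A| := (abs_jac_eq_prod_singularValues A).symm
    _ = jac A := abs_of_nonneg hJ

theorem maxStretch_nonneg : 0 ≤ maxStretch A :=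
  Real.sSup_nonneg <| by rintro r ⟨h, -, rfl⟩; exact norm_nonneg _

theorem minStretch_nonneg : 0 ≤ minStretch A :=
  Real.sInf_nonneg <| by rintro r ⟨h, -, rfl⟩; exact norm_nonneg _

theorem minStretch_pos (hn : 0 < n) (hJ : 0 < jac A) : 0 < minStretch A := by
  refine (minStretch_nonneg A).lt_of_ne fun h => hJ.not_ge ?_
  simpa [← h] using jac_le_maxStretch_pow_mul_minStretch A hn

theorem minStretch_le_norm_apply {h : EuclideanSpace ℝ (Fin n)} (hh : ‖h‖ = 1) :
    minStretch A ≤ ‖A h‖ :=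
  csInf_le ⟨0, by rintro r ⟨h, -, rfl⟩; exact norm_nonneg _⟩ ⟨h, hh, rfl⟩

theorem norm_apply_le_maxStretch {h : EuclideanSpace ℝ (Fin n)} (hh : ‖h‖ = 1) :
    ‖A h‖ ≤ maxStretch A :=
  le_csSup ⟨‖A‖, by rintro r ⟨h, hh, rfl⟩; exact A.unit_le_opNorm h hh.le⟩ ⟨h, hh, rfl⟩

theorem ellAng_nonneg (u : EuclideanSpace ℝ (Fin n)) : 0 ≤ ellAng A u :=
  Real.sInf_nonneg <| by rintro r ⟨h, -, -, rfl⟩; positivity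

variable {u : EuclideanSpace ℝ (Fin n)}

theorem norm_apply_mem_ellAng_set (hu : ‖u‖ = 1) :
    ‖A u‖ ∈ {r : ℝ | ∃ h : EuclideanSpace ℝ (Fin n),
      ‖h‖ = 1 ∧ (inner ℝ h u : ℝ) ≠ 0 ∧ r = ‖A h‖ / |(inner ℝ h u : ℝ)|} := by
  have huu : (inner ℝ u u : ℝ) = 1 := by rw [real_inner_self_eq_norm_sq, hu, one_pow]
  exact ⟨u, hu, by rw [huu]; exact one_ne_zero, by rw [huu, abs_one, div_one]⟩

theorem ellAng_le_norm_apply (hu : ‖u‖ = 1) : ellAng A u ≤ ‖A u‖ :=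
  csInf_le ⟨0, by rintro r ⟨h, -, -, rfl⟩; positivity⟩ (norm_apply_mem_ellAng_set A hu)

theorem minStretch_le_ellAng (hu : ‖u‖ = 1) : minStretch A ≤ ellAng A u := by
  refine le_csInf ⟨_, norm_apply_mem_ellAng_set A hu⟩ ?_
  rintro r ⟨h, hh, hhu, rfl⟩
  have hcos : |(inner ℝ h u : ℝ)| ≤ 1 := by
    simpa [hh, hu] using abs_real_inner_le_norm h u
  exact (minStretch_le_norm_apply A hh).trans
    (le_div_self (norm_nonneg _) (abs_pos.mpr hhu) hcos)

theorem Ldil_le_Kdil_pow (hn : 0 < n) (hJ : 0 < jac A) : Ldil A ≤ Kdil A ^ (n - 1) := by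
  have hl := minStretch_pos A hn hJ
  rw [Ldil, Kdil, div_pow, div_le_div_iff₀ (by positivity) (by positivity)]
  calc jac A * jac A ^ (n - 1) = jac A ^ n := by rw [← pow_succ', Nat.sub_add_cancel hn]
    _ ≤ (maxStretch A ^ (n - 1) * minStretch A) ^ n :=
        pow_le_pow_left₀ hJ.le (jac_le_maxStretch_pow_mul_minStretch A hn) n
    _ = (maxStretch A ^ n) ^ (n - 1) * minStretch A ^ n := by ring

theorem Kdil_le_Ldil_pow (hn : 0 < n) (hJ : 0 < jac A) : Kdil A ≤ Ldil A ^ (n - 1) := by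
  have hl := minStretch_pos A hn hJ
  have hm := maxStretch_nonneg A
  rw [Ldil, Kdil, div_pow, div_le_div_iff₀ hJ (by positivity)]
  calc maxStretch A ^ n * (minStretch A ^ n) ^ (n - 1)
        = (maxStretch A * minStretch A ^ (n - 1)) ^ n := by ring
    _ ≤ jac A ^ n := pow_le_pow_left₀ (by positivity)
        (maxStretch_mul_minStretch_pow_le_jac A hn hJ.le) n
    _ = jac A ^ (n - 1) * jac A := by rw [← pow_succ, Nat.sub_add_cancel hn]

theorem Ddil_le_Ldil (hn : 0 < n) (hJ : 0 < jac A) (hu : ‖u‖ = 1) : Ddil A u ≤ Ldil A :=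
  div_le_div_of_nonneg_left hJ.le (pow_pos (minStretch_pos A hn hJ) n)
    (pow_le_pow_left₀ (minStretch_nonneg A) (minStretch_le_ellAng A hu) n)

theorem Qdil_le_Kdil_rpow (hn : 1 ≤ n) (hJ : 0 ≤ jac A) (hu : ‖u‖ = 1) :
    Qdil A u ≤ Kdil A ^ ((1 : ℝ) / ((n : ℝ) - 1)) := by
  refine Real.rpow_le_rpow (by positivity) ?_ (one_div_natCast_sub_one_nonneg hn)
  exact div_le_div_of_nonneg_right
    (pow_le_pow_left₀ (norm_nonneg _) (norm_apply_le_maxStretch A hu) n) hJ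

theorem one_div_Ddil_rpow_le_Qdil (hn : 1 ≤ n) (hJ : 0 ≤ jac A) (hu : ‖u‖ = 1) :
    1 / Ddil A u ^ ((1 : ℝ) / ((n : ℝ) - 1)) ≤ Qdil A u := by
  have hℓ := ellAng_nonneg A u
  rw [Ddil, one_div, ← Real.inv_rpow (by positivity), inv_div]
  refine Real.rpow_le_rpow (by positivity) ?_ (one_div_natCast_sub_one_nonneg hn)
  exact div_le_div_of_nonneg_right
    (pow_le_pow_left₀ hℓ (ellAng_le_norm_apply A hu) n) hJ

end Dilatation

theorem stmt0_general {n : ℕ} (hn : 2 ≤ n)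
    (f : EuclideanSpace ℝ (Fin n) → EuclideanSpace ℝ (Fin n))
    (x x₀ : EuclideanSpace ℝ (Fin n)) (hx : x₀ ≠ x)
    (hJ : 0 < jac (fderiv ℝ f x)) :
    1 / Kdil (fderiv ℝ f x) ≤ 1 / Ldil (fderiv ℝ f x) ^ ((1:ℝ)/((n:ℝ)-1)) ∧
    1 / Ldil (fderiv ℝ f x) ^ ((1:ℝ)/((n:ℝ)-1)) ≤
      1 / Ddil (fderiv ℝ f x) (‖x - x₀‖⁻¹ • (x - x₀)) ^ ((1:ℝ)/((n:ℝ)-1)) ∧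
    1 / Ddil (fderiv ℝ f x) (‖x - x₀‖⁻¹ • (x - x₀)) ^ ((1:ℝ)/((n:ℝ)-1)) ≤
      Qdil (fderiv ℝ f x) (‖x - x₀‖⁻¹ • (x - x₀)) ∧
    Qdil (fderiv ℝ f x) (‖x - x₀‖⁻¹ • (x - x₀)) ≤ Kdil (fderiv ℝ f x) ^ ((1:ℝ)/((n:ℝ)-1)) ∧
    Kdil (fderiv ℝ f x) ^ ((1:ℝ)/((n:ℝ)-1)) ≤ Ldil (fderiv ℝ f x) := by
  set A := fderiv ℝ f x
  set u := ‖x - x₀‖⁻¹ • (x - x₀)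
  have hu : ‖u‖ = 1 := norm_smul_inv_norm (sub_ne_zero.mpr hx.symm)
  have hn0 : 0 < n := by omega
  have hl : 0 < minStretch A := minStretch_pos A hn0 hJ
  have hK : 0 ≤ Kdil A := div_nonneg (pow_nonneg (maxStretch_nonneg A) n) hJ.le
  have hL : 0 < Ldil A := div_pos hJ (pow_pos hl n)
  have hD : 0 < Ddil A u := div_pos hJ (pow_pos (hl.trans_le (minStretch_le_ellAng A hu)) n)
  refine ⟨?_, ?_, one_div_Ddil_rpow_le_Qdil A (by omega) hJ.le hu,
    Qdil_le_Kdil_rpow A (by omega) hJ.le hu,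
    (Real.rpow_one_div_sub_one_le_iff hn hK hL.le).mpr (Kdil_le_Ldil_pow A hn0 hJ)⟩
  · exact one_div_le_one_div_of_le (by positivity)
      ((Real.rpow_one_div_sub_one_le_iff hn hL.le hK).mpr (Ldil_le_Kdil_pow A hn0 hJ))
  · exact one_div_le_one_div_of_le (by positivity)
      (Real.rpow_le_rpow hD.le (Ddil_le_Ldil A hn0 hJ hu)
        (one_div_natCast_sub_one_nonneg (by omega)))

/-- chain of inequalities between dilatations at a regular point. -/
theorem stmt0 {n : ℕ} (hn : 2 ≤ n)
    (f : EuclideanSpace ℝ (Fin n) → EuclideanSpace ℝ (Fin n))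
    (x x₀ : EuclideanSpace ℝ (Fin n)) (hx : x₀ ≠ x)
    (hdiff : DifferentiableAt ℝ f x) (hJ : 0 < jac (fderiv ℝ f x)) :
    1 / Kdil (fderiv ℝ f x) ≤ 1 / Ldil (fderiv ℝ f x) ^ ((1:ℝ)/((n:ℝ)-1)) ∧
    1 / Ldil (fderiv ℝ f x) ^ ((1:ℝ)/((n:ℝ)-1)) ≤
      1 / Ddil (fderiv ℝ f x) (‖x - x₀‖⁻¹ • (x - x₀)) ^ ((1:ℝ)/((n:ℝ)-1)) ∧
    1 / Ddil (fderiv ℝ f x) (‖x - x₀‖⁻¹ • (x - x₀)) ^ ((1:ℝ)/((n:ℝ)-1)) ≤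
      Qdil (fderiv ℝ f x) (‖x - x₀‖⁻¹ • (x - x₀)) ∧
    Qdil (fderiv ℝ f x) (‖x - x₀‖⁻¹ • (x - x₀)) ≤ Kdil (fderiv ℝ f x) ^ ((1:ℝ)/((n:ℝ)-1)) ∧
    Kdil (fderiv ℝ f x) ^ ((1:ℝ)/((n:ℝ)-1)) ≤ Ldil (fderiv ℝ f x) :=
  stmt0_general hn f x x₀ hx hJ
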